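/- For each j ∈ K, let (A_j, p_{A_j}) be an ensemble of functions U_j^n → Im A_j satisfying the strong (α_j, β_j)-hash condition, with the A_j and uniformly distributed a_j ∈ Im A_j all mutually independent. For J ⊆ K define α_J ≡ Π_{j∈J} α_j and β_J ≡ Π_{j∈J}(β_j+1) − 1. Then for every nonempty T ⊆ Π_{j∈K} U_j^n: P({(A_K, a_K) : T ∩ C_{A_K}(a_K) = ∅}) ≤ α_K − 1 + Σ over proper subsets J ⊊ K of |Im A_{J^c}|·|T_{J|J^c}|·α_J·(β_{J^c}+1)/|T|, where |Im A_{J^c}| = Π_{j∈J^c}|Im A_j| and |T_{J|J^c}| is defined as 1 if J = ∅, |T| if J = K, and max over u_{J^c} in the projection of T of the fiber size otherwise. -/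

import Mathlib

/-!
Let `N = |T ∩ C_{A_K}(a_K)|`. Its mean is `|T| / |Im A_K|`, and by the second moment method
`P(N = 0) ≤ E[N²] / (E N)² - 1`. By independence, `E[N²]` is `1 / |Im A_K|` times
`Σ_{u, u' ∈ T} Π_j p(A_j u_j = A_j u'_j)`. Each collision probability is at most
`α_j / |Im A_j|` plus a heavy part whose row sums are at most `β_j + 1` by the strong hash
condition. Expanding the product over `j` as a sum over the set `J` of coordinates that take the
`α`-part, the heavy factor only depends on `u'` outside `J`, so its sum over `u' ∈ T` is at most
`|T_{J|J^c}| Π_{j ∉ J} (β_j + 1)`. The term `J = K` contributes `α_K`.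
-/

open Finset
open scoped Classical

/-- Collision probability `p_A({A : Au = Au'})` for an ensemble of functions. -/
noncomputable def collP {𝒜 X B : Type*} [Fintype 𝒜] (p : 𝒜 → ℝ)
    (F : 𝒜 → X → B) (u u' : X) : ℝ :=
  ∑ a : 𝒜, if F a u = F a u' then p a else 0

/-- The strong (α,β)-hash condition for an ensemble of functions `X → B`. -/
noncomputable def StrongHash {𝒜 X B : Type*} [Fintype 𝒜] [Fintype X] [Fintype B]
    (p : 𝒜 → ℝ) (F : 𝒜 → X → B) (α β : ℝ) : Prop :=
  ∀ u : X,
    ∑ u' ∈ (Finset.univ.erase u).filter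
        (fun u' => α / (Fintype.card B : ℝ) < collP p F u u'),
      collP p F u u' ≤ β

/-- `|T_{J|J^c}|`: 1 if `J = ∅`, `|T|` if `J = K`, and otherwise the maximum fiber size. -/
noncomputable def fiberMax {K : Type*} [Fintype K] {X : K → Type*}
    (T : Finset (∀ j, X j)) (J : Finset K) : ℕ :=
  if J = ∅ then 1
  else if J = Finset.univ then T.card
  else T.sup fun w => (T.filter fun w' => ∀ j ∉ J, w' j = w j).card

theorem sum_filter_eq_zero_le_div_sq_sub_one {ι : Type*} (s : Finset ι) (μ N : ι → ℝ)
    (hμ : ∀ i ∈ s, 0 ≤ μ i) (hμ1 : ∑ i ∈ s, μ i = 1) (hm : ∑ i ∈ s, μ i * N i ≠ 0) :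
    ∑ i ∈ s with N i = 0, μ i ≤ (∑ i ∈ s, μ i * N i ^ 2) / (∑ i ∈ s, μ i * N i) ^ 2 - 1 := by
  set m := ∑ i ∈ s, μ i * N i
  have hvar : ∑ i ∈ s, μ i * (N i - m) ^ 2 = ∑ i ∈ s, μ i * N i ^ 2 - m ^ 2 := by
    calc ∑ i ∈ s, μ i * (N i - m) ^ 2
        = ∑ i ∈ s, (μ i * N i ^ 2 - 2 * m * (μ i * N i) + m ^ 2 * μ i) :=
          sum_congr rfl fun i _ => by ring
      _ = ∑ i ∈ s, μ i * N i ^ 2 - m ^ 2 := by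
          rw [sum_add_distrib, sum_sub_distrib, ← mul_sum, ← mul_sum, hμ1]
          ring
  -- On `{N = 0}` the squared deviation from the mean is `m ^ 2`.
  have hzero : (∑ i ∈ s with N i = 0, μ i) * m ^ 2 ≤ ∑ i ∈ s, μ i * (N i - m) ^ 2 := by
    rw [sum_mul, sum_filter]
    refine sum_le_sum fun i hi => ?_
    split_ifs with h
    · simp [h]
    · exact mul_nonneg (hμ i hi) (sq_nonneg _)
  rw [le_sub_iff_add_le, le_div_iff₀ (by positivity)]
  linarith

theorem prod_mul_prod_div {ι R : Type*} [Fintype ι] [Field R] (J : Finset ι) (a c : ι → R)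
    (hc : ∀ i, c i ≠ 0) :
    (∏ i, c i) * ∏ i ∈ J, a i / c i = (∏ i ∈ Jᶜ, c i) * ∏ i ∈ J, a i := by
  have hJ : ∏ i ∈ J, c i ≠ 0 := prod_ne_zero_iff.2 fun i _ => hc i
  rw [← prod_mul_prod_compl J c, prod_div_distrib]
  field_simp

section Coordinate

variable {𝒜 X B : Type*} [Fintype 𝒜] (p : 𝒜 → ℝ) (F : 𝒜 → X → B)

theorem collP_nonneg (hp : ∀ a, 0 ≤ p a) (u u' : X) : 0 ≤ collP p F u u' :=
  sum_nonneg fun a _ => by split_ifs <;> simp [hp a]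

theorem collP_self (hp1 : ∑ a, p a = 1) (u : X) : collP p F u u = 1 := by
  simp [collP, hp1]

variable [Fintype B]

theorem sum_sum_mul_ite_eq (hp1 : ∑ a, p a = 1) (c : ℝ) (u : X) :
    ∑ a, ∑ b : B, p a * c * (if F a u = b then 1 else 0) = c := by
  simp [← sum_mul, hp1]

theorem sum_sum_mul_ite_eq_mul_ite_eq (c : ℝ) (u u' : X) :
    ∑ a, ∑ b : B, p a * c * ((if F a u = b then 1 else 0) * (if F a u' = b then 1 else 0))
      = c * collP p F u u' := by
  simp only [ite_mul, one_mul, zero_mul, mul_ite, mul_zero, sum_ite_eq, mem_univ, if_true,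
    collP, mul_sum]
  exact sum_congr rfl fun a _ => by split_ifs <;> simp_all [mul_comm]

/-- The collisions counted by the strong hash condition, together with the diagonal. -/
noncomputable def heavyCollP (α : ℝ) (u u' : X) : ℝ :=
  if u' = u ∨ α / Fintype.card B < collP p F u u' then collP p F u u' else 0

theorem heavyCollP_nonneg (hp : ∀ a, 0 ≤ p a) (α : ℝ) (u u' : X) :
    0 ≤ heavyCollP p F α u u' := by
  unfold heavyCollP
  split_ifs
  exacts [collP_nonneg p F hp u u', le_rfl]

theorem collP_le_add_heavyCollP {α : ℝ} (hα : 0 ≤ α) (u u' : X) :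
    collP p F u u' ≤ α / Fintype.card B + heavyCollP p F α u u' := by
  unfold heavyCollP
  split_ifs with h
  · exact le_add_of_nonneg_left (by positivity)
  · simpa using not_lt.1 (not_or.1 h).2

theorem sum_heavyCollP_le [Fintype X] (hp1 : ∑ a, p a = 1) {α β : ℝ}
    (hhash : StrongHash p F α β) (u : X) : ∑ u', heavyCollP p F α u u' ≤ β + 1 := by
  rw [← add_sum_erase _ _ (mem_univ u), heavyCollP, if_pos (Or.inl rfl), collP_self p F hp1,
    add_comm]
  gcongr
  refine le_of_eq_of_le ?_ (hhash u)
  rw [sum_filter]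
  refine sum_congr rfl fun u' hu' => ?_
  simp only [heavyCollP, (mem_erase.1 hu').1, false_or]

end Coordinate

section Fibers

variable {K : Type*} [Fintype K] {X : K → Type*}

theorem card_filter_agree_le_fiberMax (T : Finset (∀ j, X j)) (J : Finset K) {w : ∀ j, X j}
    (hw : w ∈ T) : #{w' ∈ T | ∀ j ∉ J, w' j = w j} ≤ fiberMax T J := by
  unfold fiberMax
  split_ifs with hJ hJK
  · subst hJ
    refine card_le_one.2 fun a ha b hb => ?_
    simp only [notMem_empty, not_false_eq_true, forall_const, mem_filter] at ha hb
    exact funext fun j => (ha.2 j).trans (hb.2 j).symm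
  · exact card_filter_le _ _
  · exact le_sup (f := fun w => #{w' ∈ T | ∀ j ∉ J, w' j = w j}) hw

theorem sum_prod_compl_le_fiberMax_mul [∀ j, Fintype (X j)] (T : Finset (∀ j, X j))
    (J : Finset K) (g : ∀ j, X j → ℝ) (hg : ∀ j x, 0 ≤ g j x) :
    ∑ w ∈ T, ∏ j ∈ Jᶜ, g j (w j) ≤ fiberMax T J * ∏ j ∈ Jᶜ, ∑ x, g j x := by
  set r : (∀ j, X j) → ∀ j : ↥Jᶜ, X j := fun w j => w j
  set G : (∀ j : ↥Jᶜ, X j) → ℝ := fun v => ∏ j : ↥Jᶜ, g j (v j)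
  have hG : ∀ v, 0 ≤ G v := fun v => prod_nonneg fun j _ => hg _ _
  have hfiber : ∀ v ∈ T.image r, (#{w ∈ T | r w = v} : ℝ) ≤ fiberMax T J := by
    intro v hv
    obtain ⟨w, hw, rfl⟩ := mem_image.1 hv
    have hagree : ∀ w', r w' = r w ↔ ∀ j ∉ J, w' j = w j := fun w' => by
      simp only [r, funext_iff, Subtype.forall, mem_compl]
    rw [filter_congr fun w' _ => hagree w']
    exact_mod_cast card_filter_agree_le_fiberMax T J hw
  calc ∑ w ∈ T, ∏ j ∈ Jᶜ, g j (w j)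
      = ∑ w ∈ T, G (r w) := sum_congr rfl fun w _ => (prod_coe_sort Jᶜ fun j => g j (w j)).symm
    _ = ∑ v ∈ T.image r, #{w ∈ T | r w = v} • G v := sum_comp G r
    _ ≤ ∑ v ∈ T.image r, fiberMax T J * G v := sum_le_sum fun v hv => by
        rw [nsmul_eq_mul]
        exact mul_le_mul_of_nonneg_right (hfiber v hv) (hG v)
    _ ≤ ∑ v, fiberMax T J * G v :=
        sum_le_sum_of_subset_of_nonneg (subset_univ _) fun v _ _ =>
          mul_nonneg (by positivity) (hG v)
    _ = fiberMax T J * ∏ j ∈ Jᶜ, ∑ x, g j x := by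
        rw [← mul_sum, ← prod_coe_sort Jᶜ fun j => ∑ x, g j x, Fintype.prod_sum]

theorem fiberMax_univ {T : Finset (∀ j, X j)} (hT : T.Nonempty) : fiberMax T univ = T.card := by
  unfold fiberMax
  split_ifs with hK hK'
  · have : IsEmpty K := univ_eq_empty_iff.1 hK
    exact le_antisymm hT.card_pos (card_le_one.2 fun a _ b _ => Subsingleton.elim a b)
  · rfl
  · exact absurd rfl hK'

end Fibers

section Moments

variable {K : Type*} [Fintype K] {X B 𝒜 : K → Type*} (F : ∀ j, 𝒜 j → X j → B j)

/-- `|T ∩ C_{A_K}(a_K)|` at `ω = (A_K, a_K)`. -/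
noncomputable def binCount (T : Finset (∀ j, X j)) (ω : (∀ j, 𝒜 j) × ∀ j, B j) : ℕ :=
  #{w ∈ T | ∀ j, F j (ω.1 j) (w j) = ω.2 j}

theorem binCount_eq_zero_iff (T : Finset (∀ j, X j)) (ω : (∀ j, 𝒜 j) × ∀ j, B j) :
    binCount F T ω = 0 ↔ ∀ w ∈ T, ∃ j, F j (ω.1 j) (w j) ≠ ω.2 j := by
  simp [binCount, filter_eq_empty_iff]

theorem binCount_eq_sum (T : Finset (∀ j, X j)) (ω : (∀ j, 𝒜 j) × ∀ j, B j) :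
    (binCount F T ω : ℝ) = ∑ w ∈ T, ∏ j, if F j (ω.1 j) (w j) = ω.2 j then 1 else 0 := by
  rw [binCount, natCast_card_filter]
  simp_rw [Fintype.prod_boole]

variable [∀ j, Fintype (B j)] [∀ j, Fintype (𝒜 j)] (p : ∀ j, 𝒜 j → ℝ)

/-- The law of `(A_K, a_K)`. -/
noncomputable def jointWeight (ω : (∀ j, 𝒜 j) × ∀ j, B j) : ℝ :=
  (∏ j, p j (ω.1 j)) * ∏ j, (1 / (Fintype.card (B j) : ℝ))

theorem sum_jointWeight_mul_prod (g : ∀ j, 𝒜 j → B j → ℝ) :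
    ∑ ω : (∀ j, 𝒜 j) × ∀ j, B j, jointWeight p ω * ∏ j, g j (ω.1 j) (ω.2 j)
      = ∏ j, ∑ a, ∑ b, p j a * (1 / (Fintype.card (B j) : ℝ)) * g j a b := by
  simp_rw [Fintype.prod_sum, Fintype.sum_prod_type, jointWeight, prod_mul_distrib]

theorem sum_jointWeight [∀ j, Nonempty (B j)] (hp1 : ∀ j, ∑ a, p j a = 1) :
    ∑ ω : (∀ j, 𝒜 j) × ∀ j, B j, jointWeight p ω = 1 := by
  simpa [← mul_sum, ← sum_mul, hp1, Fintype.card_ne_zero] using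
    sum_jointWeight_mul_prod (B := B) p fun _ _ _ => 1

theorem sum_jointWeight_mul_binCount (hp1 : ∀ j, ∑ a, p j a = 1) (T : Finset (∀ j, X j)) :
    ∑ ω, jointWeight p ω * binCount F T ω
      = T.card * ∏ j, (1 / (Fintype.card (B j) : ℝ)) := by
  calc ∑ ω, jointWeight p ω * binCount F T ω
      = ∑ w ∈ T, ∑ ω, jointWeight p ω * ∏ j, if F j (ω.1 j) (w j) = ω.2 j then 1 else 0 := by
        simp_rw [binCount_eq_sum, mul_sum]
        exact sum_comm
    _ = ∑ w ∈ T, ∏ j, (1 / (Fintype.card (B j) : ℝ)) := sum_congr rfl fun w _ => by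
        rw [sum_jointWeight_mul_prod p fun j a b => if F j a (w j) = b then 1 else 0]
        simp_rw [sum_sum_mul_ite_eq _ _ (hp1 _)]
    _ = T.card * ∏ j, (1 / (Fintype.card (B j) : ℝ)) := by rw [sum_const, nsmul_eq_mul]

theorem sum_jointWeight_mul_binCount_sq (T : Finset (∀ j, X j)) :
    ∑ ω, jointWeight p ω * (binCount F T ω : ℝ) ^ 2
      = (∏ j, (1 / (Fintype.card (B j) : ℝ)))
          * ∑ w ∈ T, ∑ w' ∈ T, ∏ j, collP (p j) (F j) (w j) (w' j) := by
  calc ∑ ω, jointWeight p ω * (binCount F T ω : ℝ) ^ 2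
      = ∑ w ∈ T, ∑ w' ∈ T, ∑ ω, jointWeight p ω * ∏ j,
          ((if F j (ω.1 j) (w j) = ω.2 j then 1 else 0)
            * (if F j (ω.1 j) (w' j) = ω.2 j then 1 else 0)) := by
        simp_rw [binCount_eq_sum, sq, sum_mul_sum, mul_sum, ← prod_mul_distrib]
        rw [sum_comm]
        exact sum_congr rfl fun w _ => sum_comm
    _ = ∑ w ∈ T, ∑ w' ∈ T, ∏ j,
          ((1 / (Fintype.card (B j) : ℝ)) * collP (p j) (F j) (w j) (w' j)) :=
        sum_congr rfl fun w _ => sum_congr rfl fun w' _ => by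
          rw [sum_jointWeight_mul_prod p fun j a b =>
            (if F j a (w j) = b then 1 else 0) * (if F j a (w' j) = b then 1 else 0)]
          simp_rw [sum_sum_mul_ite_eq_mul_ite_eq]
    _ = _ := by simp_rw [prod_mul_distrib, mul_sum]

theorem sum_ite_forall_exists_ne_eq_sum_binCount_eq_zero [∀ j, Fintype (X j)]
    (T : Finset (∀ j, X j)) :
    ∑ a : ∀ j, 𝒜 j, ∑ b : ∀ j, B j,
        (if ∀ w ∈ T, ∃ j, F j (a j) (w j) ≠ b j
          then (∏ j, p j (a j)) * ∏ j, (1 / (Fintype.card (B j) : ℝ)) else 0)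
      = ∑ ω with binCount F T ω = 0, jointWeight p ω := by
  simp only [sum_filter, ← Fintype.sum_prod_type', binCount_eq_zero_iff, jointWeight]

theorem sum_binCount_eq_zero_le [∀ j, Nonempty (B j)] (hp : ∀ j a, 0 ≤ p j a)
    (hp1 : ∀ j, ∑ a, p j a = 1) {T : Finset (∀ j, X j)} (hT : T.Nonempty) :
    ∑ ω with binCount F T ω = 0, jointWeight p ω
      ≤ (∏ j, (Fintype.card (B j) : ℝ))
          * (∑ w ∈ T, ∑ w' ∈ T, ∏ j, collP (p j) (F j) (w j) (w' j)) / T.card ^ 2 - 1 := by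
  have hB : ∏ j, (Fintype.card (B j) : ℝ) ≠ 0 :=
    prod_ne_zero_iff.2 fun j _ => Nat.cast_ne_zero.2 Fintype.card_ne_zero
  have hT0 : (T.card : ℝ) ≠ 0 := by exact_mod_cast hT.card_pos.ne'
  have h := sum_filter_eq_zero_le_div_sq_sub_one univ (jointWeight p)
    (fun ω => binCount F T ω)
    (fun ω _ => mul_nonneg (prod_nonneg fun j _ => hp j _) (prod_nonneg fun j _ => by positivity))
    (sum_jointWeight p hp1)
    (by rw [sum_jointWeight_mul_binCount F p hp1]; simp [hT0, hB])
  rw [sum_jointWeight_mul_binCount F p hp1, sum_jointWeight_mul_binCount_sq] at h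
  simp only [Nat.cast_eq_zero] at h
  refine h.trans_eq ?_
  simp only [one_div, prod_inv_distrib]
  field_simp

end Moments

section Collisions

variable {K : Type*} [Fintype K] {X B 𝒜 : K → Type*}
  [∀ j, Fintype (X j)] [∀ j, Fintype (B j)] [∀ j, Fintype (𝒜 j)]
  {p : ∀ j, 𝒜 j → ℝ} {F : ∀ j, 𝒜 j → X j → B j} {α β : K → ℝ}

theorem sum_prod_collP_le (hp : ∀ j a, 0 ≤ p j a) (hp1 : ∀ j, ∑ a, p j a = 1)
    (hα : ∀ j, 0 ≤ α j) (hhash : ∀ j, StrongHash (p j) (F j) (α j) (β j))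
    (T : Finset (∀ j, X j)) (w : ∀ j, X j) :
    ∑ w' ∈ T, ∏ j, collP (p j) (F j) (w j) (w' j)
      ≤ ∑ J : Finset K, fiberMax T J * (∏ j ∈ J, α j / Fintype.card (B j))
          * ∏ j ∈ Jᶜ, (β j + 1) := by
  set c : K → ℝ := fun j => α j / Fintype.card (B j)
  set e : ∀ j, X j → ℝ := fun j => heavyCollP (p j) (F j) (α j) (w j)
  have hc : ∀ J : Finset K, 0 ≤ ∏ j ∈ J, c j :=
    fun J => prod_nonneg fun j _ => div_nonneg (hα j) (Nat.cast_nonneg _)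
  have he : ∀ j x, 0 ≤ e j x := fun j => heavyCollP_nonneg _ _ (hp j) _ _
  calc ∑ w' ∈ T, ∏ j, collP (p j) (F j) (w j) (w' j)
      ≤ ∑ w' ∈ T, ∏ j, (c j + e j (w' j)) :=
        sum_le_sum fun w' _ => prod_le_prod (fun j _ => collP_nonneg _ _ (hp j) _ _)
          fun j _ => collP_le_add_heavyCollP _ _ (hα j) _ _
    _ = ∑ J : Finset K, (∏ j ∈ J, c j) * ∑ w' ∈ T, ∏ j ∈ Jᶜ, e j (w' j) := by
        simp_rw [Fintype.prod_add, mul_sum]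
        exact sum_comm
    _ ≤ ∑ J : Finset K, (∏ j ∈ J, c j) * (fiberMax T J * ∏ j ∈ Jᶜ, (β j + 1)) := by
        gcongr with J
        · exact hc J
        refine (sum_prod_compl_le_fiberMax_mul T J e he).trans ?_
        gcongr with j
        · exact fun j _ => sum_nonneg fun x _ => he j x
        · exact sum_heavyCollP_le _ _ (hp1 j) (hhash j) (w j)
    _ = _ := sum_congr rfl fun J _ => by ring

theorem prod_card_mul_sum_sum_prod_collP_div_le (hp : ∀ j a, 0 ≤ p j a)
    (hp1 : ∀ j, ∑ a, p j a = 1) (hα : ∀ j, 0 ≤ α j)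
    (hhash : ∀ j, StrongHash (p j) (F j) (α j) (β j)) [∀ j, Nonempty (B j)]
    {T : Finset (∀ j, X j)} (hT : T.Nonempty) :
    (∏ j, (Fintype.card (B j) : ℝ))
        * (∑ w ∈ T, ∑ w' ∈ T, ∏ j, collP (p j) (F j) (w j) (w' j)) / T.card ^ 2
      ≤ ∑ J : Finset K, (∏ j ∈ Jᶜ, (Fintype.card (B j) : ℝ)) * fiberMax T J
          * (∏ j ∈ J, α j) * (∏ j ∈ Jᶜ, (β j + 1)) / T.card := by
  have hT0 : (0 : ℝ) < T.card := by exact_mod_cast hT.card_pos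
  have hcoll := sum_le_sum fun w (_ : w ∈ T) => sum_prod_collP_le hp hp1 hα hhash T w
  rw [sum_const, nsmul_eq_mul] at hcoll
  calc _ ≤ (∏ j, (Fintype.card (B j) : ℝ)) * (T.card * ∑ J : Finset K, fiberMax T J
          * (∏ j ∈ J, α j / Fintype.card (B j)) * ∏ j ∈ Jᶜ, (β j + 1)) / T.card ^ 2 := by
        gcongr
    _ = ∑ J : Finset K, fiberMax T J
          * ((∏ j, (Fintype.card (B j) : ℝ)) * ∏ j ∈ J, α j / Fintype.card (B j))
          * (∏ j ∈ Jᶜ, (β j + 1)) / T.card := by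
        rw [mul_sum, mul_sum, sum_div]
        refine sum_congr rfl fun J _ => ?_
        field_simp
    _ = _ := sum_congr rfl fun J _ => by
        rw [prod_mul_prod_div _ α _ fun j => Nat.cast_ne_zero.2 Fintype.card_ne_zero]
        ring

end Collisions

theorem stmt9_general {K : Type*} [Fintype K] {X B 𝒜 : K → Type*}
    [∀ j, Fintype (X j)] [∀ j, Fintype (B j)] [∀ j, Nonempty (B j)] [∀ j, Fintype (𝒜 j)]
    (p : ∀ j, 𝒜 j → ℝ) (hp : ∀ j a, 0 ≤ p j a) (hp1 : ∀ j, ∑ a : 𝒜 j, p j a = 1)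
    (F : ∀ j, 𝒜 j → X j → B j)
    (α β : K → ℝ) (hα : ∀ j, 0 ≤ α j)
    (hhash : ∀ j, StrongHash (p j) (F j) (α j) (β j))
    (T : Finset (∀ j, X j)) (hT : T.Nonempty) :
    ∑ a : ∀ j, 𝒜 j, ∑ b : ∀ j, B j,
        (if ∀ w ∈ T, ∃ j, F j (a j) (w j) ≠ b j
          then (∏ j, p j (a j)) * ∏ j, (1 / (Fintype.card (B j) : ℝ))
          else 0) ≤
      (∏ j, α j) - 1
        + ∑ J ∈ Finset.univ.powerset.filter (fun J : Finset K => J ≠ Finset.univ),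
            (∏ j ∈ Jᶜ, (Fintype.card (B j) : ℝ)) * (fiberMax T J : ℝ)
              * (∏ j ∈ J, α j) * (∏ j ∈ Jᶜ, (β j + 1)) / (T.card : ℝ) := by
  have hUniv : (∏ j ∈ univᶜ, (Fintype.card (B j) : ℝ)) * fiberMax T univ
      * (∏ j ∈ univ, α j) * (∏ j ∈ univᶜ, (β j + 1)) / T.card = ∏ j, α j := by
    have hT0 : (T.card : ℝ) ≠ 0 := by exact_mod_cast hT.card_pos.ne'
    simp only [compl_univ, prod_empty, fiberMax_univ hT]
    field_simp
  rw [sum_ite_forall_exists_ne_eq_sum_binCount_eq_zero, powerset_univ, filter_ne',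
    sum_erase_eq_sub (mem_univ _), hUniv]
  have hmiss := sum_binCount_eq_zero_le F p hp hp1 hT
  have hcoll := prod_card_mul_sum_sum_prod_collP_div_le hp hp1 hα hhash hT
  linarith

/-- Multi-terminal saturation property. -/
theorem stmt9 {K : Type*} [Fintype K] {X B 𝒜 : K → Type*}
    [∀ j, Fintype (X j)] [∀ j, Fintype (B j)] [∀ j, Nonempty (B j)] [∀ j, Fintype (𝒜 j)]
    (p : ∀ j, 𝒜 j → ℝ) (hp : ∀ j a, 0 ≤ p j a) (hp1 : ∀ j, ∑ a : 𝒜 j, p j a = 1)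
    (F : ∀ j, 𝒜 j → X j → B j)
    (α β : K → ℝ) (hα : ∀ j, 0 ≤ α j) (hβ : ∀ j, 0 ≤ β j)
    (hhash : ∀ j, StrongHash (p j) (F j) (α j) (β j))
    (T : Finset (∀ j, X j)) (hT : T.Nonempty) :
    ∑ a : ∀ j, 𝒜 j, ∑ b : ∀ j, B j,
        (if ∀ w ∈ T, ∃ j, F j (a j) (w j) ≠ b j
          then (∏ j, p j (a j)) * ∏ j, (1 / (Fintype.card (B j) : ℝ))
          else 0) ≤
      (∏ j, α j) - 1
        + ∑ J ∈ Finset.univ.powerset.filter (fun J : Finset K => J ≠ Finset.univ),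
            (∏ j ∈ Jᶜ, (Fintype.card (B j) : ℝ)) * (fiberMax T J : ℝ)
              * (∏ j ∈ J, α j) * (∏ j ∈ Jᶜ, (β j + 1)) / (T.card : ℝ) :=
  stmt9_general p hp hp1 F α β hα hhash T hT
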